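/- Let γ₁, γ₂, γ₃ be real numbers, x₁, x₂, x₃ real numbers, and define p : ℝ × ℝ × ℝ → ℝ by p(t, θ, φ) = (1/π)(1 + e^{−(γ₂+γ₃)t} x₁ sinθ cosφ + e^{−(γ₁+γ₃)t} x₂ sinθ sinφ + e^{−(γ₁+γ₂)t} x₃ cosθ). Then for every t ∈ ℝ and every (θ, φ) with θ ∈ (0, π), p satisfies ∂ₜ p(t,θ,φ) = (1/16)[γ₁ X₁(X₁ p(t,·,·)) + γ₂ X₂(X₂ p(t,·,·)) + γ₃ X₃(X₃ p(t,·,·))](θ,φ), where X₁ f = −4 sinφ ∂θ f − 4 cotθ cosφ ∂φ f, X₂ f = 4 cosφ ∂θ f − 4 cotθ sinφ ∂φ f, X₃ f = 4 ∂φ f. -/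

import Mathlib

open Real

/-- Partial derivative with respect to the first variable `θ`. -/
noncomputable def dTheta (f : ℝ → ℝ → ℝ) (θ φ : ℝ) : ℝ := deriv (fun x => f x φ) θ

/-- Partial derivative with respect to the second variable `φ`. -/
noncomputable def dPhi (f : ℝ → ℝ → ℝ) (θ φ : ℝ) : ℝ := deriv (fun y => f θ y) φ

/-- The Hamiltonian vector field of `σ₁`: `X₁ f = −4 sinφ ∂θ f − 4 cotθ cosφ ∂φ f`. -/
noncomputable def X1 (f : ℝ → ℝ → ℝ) (θ φ : ℝ) : ℝ :=
  -4 * sin φ * dTheta f θ φ - 4 * (cos θ / sin θ) * cos φ * dPhi f θ φ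

/-- The Hamiltonian vector field of `σ₂`: `X₂ f = 4 cosφ ∂θ f − 4 cotθ sinφ ∂φ f`. -/
noncomputable def X2 (f : ℝ → ℝ → ℝ) (θ φ : ℝ) : ℝ :=
  4 * cos φ * dTheta f θ φ - 4 * (cos θ / sin θ) * sin φ * dPhi f θ φ

/-- The Hamiltonian vector field of `σ₃`: `X₃ f = 4 ∂φ f`. -/
noncomputable def X3 (f : ℝ → ℝ → ℝ) (θ φ : ℝ) : ℝ := 4 * dPhi f θ φ

/-!
Write `n(θ, φ) = (sin θ cos φ, sin θ sin φ, cos θ)` for the point of the unit sphere. The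
functions `A + v · n` form a family that each `Xₖ` maps into itself: away from the poles,
`Xₖ (A + v · n) = 4 (v × eₖ) · n`, so `Xₖ² (A + v · n) = -16 (v - vₖ eₖ) · n` kills the
`eₖ`-component of `v` and scales the other two by `-16`. Hence `(1/16) Σₖ γₖ Xₖ²` multiplies
the coefficient of `n₁` by `-(γ₂ + γ₃)`, and so on, which is exactly the time derivative of the
exponential coefficients of `p`.
-/

open Filter Topology

/-- The function `A + a x + b y + c z` on the unit sphere, in spherical coordinates. -/
noncomputable def sphereAffine (A a b c : ℝ) (θ φ : ℝ) : ℝ :=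
  A + a * (sin θ * cos φ) + b * (sin θ * sin φ) + c * cos θ

theorem HasDerivAt.sphereAffine {A a b c : ℝ → ℝ} {A' a' b' c' t : ℝ}
    (hA : HasDerivAt A A' t) (ha : HasDerivAt a a' t) (hb : HasDerivAt b b' t)
    (hc : HasDerivAt c c' t) (θ φ : ℝ) :
    HasDerivAt (fun s => sphereAffine (A s) (a s) (b s) (c s) θ φ)
      (sphereAffine A' a' b' c' θ φ) t :=
  ((hA.add (ha.mul_const _)).add (hb.mul_const _)).add (hc.mul_const _)

theorem dTheta_sphereAffine (A a b c θ φ : ℝ) :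
    dTheta (sphereAffine A a b c) θ φ = a * (cos θ * cos φ) + b * (cos θ * sin φ) - c * sin θ := by
  have h := (((hasDerivAt_const θ A).add (((hasDerivAt_sin θ).mul_const (cos φ)).const_mul a)).add
    (((hasDerivAt_sin θ).mul_const (sin φ)).const_mul b)).add ((hasDerivAt_cos θ).const_mul c)
  exact h.deriv.trans (by ring)

theorem dPhi_sphereAffine (A a b c θ φ : ℝ) :
    dPhi (sphereAffine A a b c) θ φ = -a * (sin θ * sin φ) + b * (sin θ * cos φ) := by
  have h := (((hasDerivAt_const φ A).add (((hasDerivAt_cos φ).const_mul (sin θ)).const_mul a)).add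
    (((hasDerivAt_sin φ).const_mul (sin θ)).const_mul b)).add (hasDerivAt_const φ (c * cos θ))
  exact h.deriv.trans (by ring)

section Congr

variable {f g : ℝ → ℝ → ℝ} {θ φ : ℝ}

theorem dTheta_congr (h : ∀ᶠ x in 𝓝 θ, f x φ = g x φ) : dTheta f θ φ = dTheta g θ φ :=
  EventuallyEq.deriv_eq h

theorem dPhi_congr (h : ∀ᶠ y in 𝓝 φ, f θ y = g θ y) : dPhi f θ φ = dPhi g θ φ :=
  EventuallyEq.deriv_eq h

theorem X1_congr (hθ : ∀ᶠ x in 𝓝 θ, f x φ = g x φ) (hφ : ∀ᶠ y in 𝓝 φ, f θ y = g θ y) :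
    X1 f θ φ = X1 g θ φ := by
  rw [X1, X1, dTheta_congr hθ, dPhi_congr hφ]

theorem X2_congr (hθ : ∀ᶠ x in 𝓝 θ, f x φ = g x φ) (hφ : ∀ᶠ y in 𝓝 φ, f θ y = g θ y) :
    X2 f θ φ = X2 g θ φ := by
  rw [X2, X2, dTheta_congr hθ, dPhi_congr hφ]

end Congr

section VectorFields

variable (A a b c : ℝ) {θ : ℝ}

theorem X1_sphereAffine (hθ : sin θ ≠ 0) (φ : ℝ) :
    X1 (sphereAffine A a b c) θ φ = sphereAffine 0 0 (4 * c) (-4 * b) θ φ := by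
  rw [X1, dTheta_sphereAffine, dPhi_sphereAffine, sphereAffine]
  field_simp
  linear_combination (-4 * b * cos θ) * sin_sq_add_cos_sq φ

theorem X2_sphereAffine (hθ : sin θ ≠ 0) (φ : ℝ) :
    X2 (sphereAffine A a b c) θ φ = sphereAffine 0 (-4 * c) 0 (4 * a) θ φ := by
  rw [X2, dTheta_sphereAffine, dPhi_sphereAffine, sphereAffine]
  field_simp
  linear_combination (4 * a * cos θ) * sin_sq_add_cos_sq φ

theorem X3_sphereAffine (θ φ : ℝ) :
    X3 (sphereAffine A a b c) θ φ = sphereAffine 0 (4 * b) (-4 * a) 0 θ φ := by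
  rw [X3, dPhi_sphereAffine, sphereAffine]
  ring

theorem eventually_sin_ne_zero (hθ : sin θ ≠ 0) : ∀ᶠ x in 𝓝 θ, sin x ≠ 0 :=
  continuous_sin.continuousAt.eventually_ne hθ

theorem X1_X1_sphereAffine (hθ : sin θ ≠ 0) (φ : ℝ) :
    X1 (X1 (sphereAffine A a b c)) θ φ = sphereAffine 0 0 (-16 * b) (-16 * c) θ φ := by
  -- `∂θ` of `X1 F` needs `X1_sphereAffine` on a neighbourhood of `θ`, where `sin` stays nonzero.
  have hX : X1 (X1 (sphereAffine A a b c)) θ φ = X1 (sphereAffine 0 0 (4 * c) (-4 * b)) θ φ :=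
    X1_congr ((eventually_sin_ne_zero hθ).mono fun x hx => X1_sphereAffine A a b c hx φ)
      (Eventually.of_forall (X1_sphereAffine A a b c hθ))
  rw [hX, X1_sphereAffine _ _ _ _ hθ]
  ring_nf

theorem X2_X2_sphereAffine (hθ : sin θ ≠ 0) (φ : ℝ) :
    X2 (X2 (sphereAffine A a b c)) θ φ = sphereAffine 0 (-16 * a) 0 (-16 * c) θ φ := by
  have hX : X2 (X2 (sphereAffine A a b c)) θ φ = X2 (sphereAffine 0 (-4 * c) 0 (4 * a)) θ φ :=
    X2_congr ((eventually_sin_ne_zero hθ).mono fun x hx => X2_sphereAffine A a b c hx φ)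
      (Eventually.of_forall (X2_sphereAffine A a b c hθ))
  rw [hX, X2_sphereAffine _ _ _ _ hθ]
  ring_nf

theorem X3_X3_sphereAffine (θ φ : ℝ) :
    X3 (X3 (sphereAffine A a b c)) θ φ = sphereAffine 0 (-16 * a) (-16 * b) 0 θ φ := by
  rw [show X3 (sphereAffine A a b c) = sphereAffine 0 (4 * b) (-4 * a) 0 from
    funext₂ (X3_sphereAffine A a b c), X3_sphereAffine]
  ring_nf

end VectorFields

theorem hasDerivAt_exp_mul_mul (k x t : ℝ) :
    HasDerivAt (fun s => exp (k * s) * x) (k * (exp (k * t) * x)) t := by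
  have h := (((hasDerivAt_id t).const_mul k).exp).mul_const x
  simp only [id, mul_one] at h
  exact h.congr_deriv (by ring)

/-- The Kähler-function solution
`p(t,θ,φ) = (1/π)(1 + e^{−(γ₂+γ₃)t}x₁sinθcosφ + e^{−(γ₁+γ₃)t}x₂sinθsinφ + e^{−(γ₁+γ₂)t}x₃cosθ)`
satisfies the geometric evolution equation `∂ₜp = (1/16) Σₖ γₖ Xₖ² p` on the Bloch sphere. -/
theorem kaehler_solution_satisfies_evolution (γ₁ γ₂ γ₃ x₁ x₂ x₃ : ℝ)
    (p : ℝ → ℝ → ℝ → ℝ)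
    (hp : p = fun t θ φ => (1 / π) * (1 + exp (-(γ₂ + γ₃) * t) * x₁ * (sin θ * cos φ)
      + exp (-(γ₁ + γ₃) * t) * x₂ * (sin θ * sin φ)
      + exp (-(γ₁ + γ₂) * t) * x₃ * cos θ))
    (t θ φ : ℝ) (hθ : θ ∈ Set.Ioo (0 : ℝ) π) :
    deriv (fun s => p s θ φ) t =
      (1 / 16) * (γ₁ * X1 (X1 (p t)) θ φ + γ₂ * X2 (X2 (p t)) θ φ + γ₃ * X3 (X3 (p t)) θ φ) := by
  have hsin : sin θ ≠ 0 := (sin_pos_of_pos_of_lt_pi hθ.1 hθ.2).ne'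
  have hp_affine : ∀ s, p s = sphereAffine π⁻¹ (exp (-(γ₂ + γ₃) * s) * (x₁ / π))
      (exp (-(γ₁ + γ₃) * s) * (x₂ / π)) (exp (-(γ₁ + γ₂) * s) * (x₃ / π)) := by
    intro s
    funext θ' φ'
    rw [hp, sphereAffine]
    ring
  have hderiv : HasDerivAt (fun s => p s θ φ) (sphereAffine 0
      (-(γ₂ + γ₃) * (exp (-(γ₂ + γ₃) * t) * (x₁ / π)))
      (-(γ₁ + γ₃) * (exp (-(γ₁ + γ₃) * t) * (x₂ / π)))
      (-(γ₁ + γ₂) * (exp (-(γ₁ + γ₂) * t) * (x₃ / π))) θ φ) t := by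
    simp only [hp_affine]
    exact (hasDerivAt_const t π⁻¹).sphereAffine (hasDerivAt_exp_mul_mul _ _ t)
      (hasDerivAt_exp_mul_mul _ _ t) (hasDerivAt_exp_mul_mul _ _ t) θ φ
  rw [hderiv.deriv, hp_affine, X1_X1_sphereAffine _ _ _ _ hsin, X2_X2_sphereAffine _ _ _ _ hsin,
    X3_X3_sphereAffine]
  simp only [sphereAffine]
  ring
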